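/- arXiv:math/9903106 — 2 statements merged into one kernel-verified Lean document; each statement's English description precedes it below -/
import Mathlib

section
/- If H and K are two distinct subgroups of the alternating group A₆, each isomorphic to A₅, and H and K are conjugate in A₆, then the intersection H ∩ K is isomorphic to the alternating group A₄ (in particular it has order 12). -/
/-!
Write `K = g H g⁻¹`. As `H ≠ K`, `g ∉ H`, so the `H`-orbit of the coset `K` in `A₆ ⧸ K` misses
`g⁻¹ K`; by orbit–stabilizer `[H : H ∩ K] < [A₆ : K] = 6`. Since `H ≅ A₅` is simple, it acts
faithfully on `H ⧸ (H ∩ K)`, so `60 ≤ [H : H ∩ K]!` and the index is `5`. The image of `H` in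
`S₅` then has index `2`, hence is `A₅`, and `H ∩ K`, the stabilizer of a point, becomes the
stabilizer of a point in `A₅`, which is `A₄`.
-/

def SubgroupIsConj {G : Type*} [Group G] (H K : Subgroup G) : Prop :=
  ∃ g : G, Subgroup.map (MulAut.conj g).toMonoidHom H = K

open Equiv Equiv.Perm MulAction Subgroup Nat

namespace Subgroup

variable {G : Type*} [Group G]

theorem smul_quotient_coe_one {H : Subgroup G} (K : Subgroup G) (h : H) :
    h • ((1 : G) : G ⧸ K) = ((h : G) : G ⧸ K) := by
  change (h : G) • ((1 : G) : G ⧸ K) = _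
  rw [MulAction.Quotient.smul_coe, smul_eq_mul, mul_one]

theorem stabilizer_quotient_coe_one (H K : Subgroup G) :
    stabilizer H ((1 : G) : G ⧸ K) = K.subgroupOf H := by
  ext h
  rw [mem_stabilizer_iff, smul_quotient_coe_one, QuotientGroup.eq, mul_one, inv_mem_iff,
    mem_subgroupOf]

end Subgroup

theorem SubgroupIsConj.relIndex_lt_index {G : Type*} [Group G] {H K : Subgroup G}
    [K.FiniteIndex] (hconj : SubgroupIsConj H K) (hne : H ≠ K) : K.relIndex H < K.index := by
  obtain ⟨g, hgK⟩ := hconj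
  have hmem (x : G) : x ∈ K ↔ g⁻¹ * x * g ∈ H := by
    rw [← hgK, mem_map_equiv, MulAut.conj_symm_apply]
  have hg : g⁻¹ ∉ H := fun hg => hne <| by
    ext x
    rw [hmem, mul_mem_cancel_right (inv_mem_iff.mp hg), mul_mem_cancel_left hg]
  have horbit : ((g⁻¹ : G) : G ⧸ K) ∉ orbit H ((1 : G) : G ⧸ K) := fun hx => by
    obtain ⟨h, hh⟩ := mem_orbit_iff.mp hx
    rw [smul_quotient_coe_one, QuotientGroup.eq, hmem, mul_assoc, inv_mul_cancel_right] at hh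
    exact hg ((mul_mem_cancel_right (inv_mem h.2)).mp hh)
  rw [relIndex, ← stabilizer_quotient_coe_one, index_stabilizer, index_eq_card]
  exact Set.ncard_lt_card fun h => horbit (h ▸ Set.mem_univ _)

theorem map_stabilizer_toPermHom {G X : Type*} [Group G] [MulAction G X] (x : X) :
    (stabilizer G x).map (toPermHom G X) = (toPermHom G X).range ⊓ stabilizer (Perm X) x := by
  ext σ
  constructor
  · rintro ⟨g, hg, rfl⟩
    exact ⟨⟨g, rfl⟩, hg⟩
  · rintro ⟨⟨g, rfl⟩, hσ⟩
    exact ⟨g, hσ, rfl⟩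

section alternatingGroup

variable {α : Type*} [Fintype α] [DecidableEq α]

theorem nat_card_alternatingGroup_fin (n : ℕ) :
    Nat.card (alternatingGroup (Fin (n + 2))) = (n + 2)! / 2 := by
  have := two_mul_nat_card_alternatingGroup (α := Fin (n + 2))
  rw [Nat.card_perm, Nat.card_fin] at this
  omega

theorem range_eq_alternatingGroup_of_two_mul_card {G : Type*} [Group G] {ρ : G →* Perm α}
    (hρ : Function.Injective ρ) (hcard : 2 * Nat.card G = (Nat.card α)!) :
    ρ.range = alternatingGroup α := by
  refine eq_alternatingGroup_of_index_eq_two ?_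
  have hG : Nat.card G ≠ 0 := fun h => factorial_ne_zero _ (by rw [← hcard, h])
  have := card_mul_index ρ.range
  rw [← Nat.card_congr (MonoidHom.ofInjective hρ).toEquiv, Nat.card_perm, ← hcard] at this
  exact Nat.eq_of_mul_eq_mul_left (Nat.pos_of_ne_zero hG) (this.trans (mul_comm _ _))

theorem map_ofSubtype_alternatingGroup (a : α) :
    (alternatingGroup {x // x ≠ a}).map ofSubtype =
      alternatingGroup α ⊓ stabilizer (Perm α) a := by
  ext σ
  rw [mem_inf, mem_map, mem_alternatingGroup, mem_stabilizer_iff, Perm.smul_def]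
  constructor
  · rintro ⟨τ, hτ, rfl⟩
    exact ⟨by rwa [sign_ofSubtype], ofSubtype_apply_of_not_mem τ (not_not.mpr rfl)⟩
  · rintro ⟨hσ, hσa⟩
    obtain ⟨τ, rfl⟩ := (mem_range_ofSubtype_iff (p := (· ≠ a)) (g := σ)).mpr
      fun x hx hxa => mem_support.mp hx (hxa ▸ hσa)
    exact ⟨τ, by rwa [mem_alternatingGroup, ← sign_ofSubtype], rfl⟩

end alternatingGroup

namespace IsSimpleGroup

variable {G : Type*} [Group G] [IsSimpleGroup G] {S : Subgroup G}

theorem toPermHom_injective (hS : S ≠ ⊤) : Function.Injective (toPermHom G (G ⧸ S)) := by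
  rw [← MonoidHom.ker_eq_bot_iff, ← normalCore_eq_ker]
  refine (eq_bot_or_eq_top_of_normal _ S.normalCore_normal).resolve_right ?_
  exact fun h => hS (top_le_iff.mp (h ▸ S.normalCore_le))

theorem card_le_factorial_index [S.FiniteIndex] (hS : S ≠ ⊤) : Nat.card G ≤ S.index ! := by
  rw [index, ← Nat.card_perm]
  exact Nat.card_le_card_of_injective _ (toPermHom_injective hS)

theorem nonempty_mulEquiv_alternatingGroup_of_index {n : ℕ} (hS : S.index = n + 1)
    (hG : 2 * Nat.card G = (n + 1)!) : Nonempty (S ≃* alternatingGroup (Fin n)) := by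
  classical
  have : S.FiniteIndex := ⟨by omega⟩
  let _ : Fintype (G ⧸ S) := Fintype.ofFinite _
  have hS_ne_top : S ≠ ⊤ := by
    rintro rfl
    rw [index_top] at hS
    obtain rfl : n = 0 := by omega
    simp at hG
  have hX : Fintype.card (G ⧸ S) = n + 1 := by rw [← Nat.card_eq_fintype_card]; exact hS
  have hρ := toPermHom_injective hS_ne_top
  have hrange := range_eq_alternatingGroup_of_two_mul_card hρ (by rwa [← index, hS])
  let x : G ⧸ S := ((1 : G) : G ⧸ S)
  have hmap :
      S.map (toPermHom G (G ⧸ S)) = (alternatingGroup {y // y ≠ x}).map ofSubtype := by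
    rw [map_ofSubtype_alternatingGroup, ← hrange, ← map_stabilizer_toPermHom,
      stabilizer_quotient]
  have e : {y // y ≠ x} ≃ Fin n := Fintype.equivFinOfCardEq (by simp [hX])
  exact ⟨(S.equivMapOfInjective _ hρ).trans <| (MulEquiv.subgroupCongr hmap).trans <|
    ((alternatingGroup _).equivMapOfInjective _ ofSubtype_injective).symm.trans e.altCongrHom⟩

end IsSimpleGroup

/-- Two distinct conjugate `A₅`-subgroups of `A₆` intersect in a subgroup isomorphic to `A₄`
(in particular of order `12`). -/
theorem conjugate_A5_subgroups_of_A6_intersect_in_A4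
    (H K : Subgroup ↥(alternatingGroup (Fin 6)))
    (hH : Nonempty (↥H ≃* ↥(alternatingGroup (Fin 5))))
    (hK : Nonempty (↥K ≃* ↥(alternatingGroup (Fin 5))))
    (hne : H ≠ K) (hconj : SubgroupIsConj H K) :
    Nonempty (↥(H ⊓ K) ≃* ↥(alternatingGroup (Fin 4))) ∧ Nat.card ↥(H ⊓ K) = 12 := by
  obtain ⟨eH⟩ := hH
  obtain ⟨eK⟩ := hK
  have : IsSimpleGroup H := eH.isSimpleGroup
  have hH60 : Nat.card H = 60 :=
    (Nat.card_congr eH.toEquiv).trans (nat_card_alternatingGroup_fin 3)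
  have hK60 : Nat.card K = 60 :=
    (Nat.card_congr eK.toEquiv).trans (nat_card_alternatingGroup_fin 3)
  have hKidx : K.index = 6 := by
    have := card_mul_index K
    rw [hK60, show Nat.card (alternatingGroup (Fin 6)) = 360 from nat_card_alternatingGroup_fin 4]
      at this
    omega
  have hS_ne_top : K.subgroupOf H ≠ ⊤ := fun h =>
    hne (eq_of_le_of_card_ge (subgroupOf_eq_top.mp h) (hK60.trans hH60.symm).le)
  have hlt := hconj.relIndex_lt_index hne
  have hle := IsSimpleGroup.card_le_factorial_index hS_ne_top
  rw [hH60, ← relIndex] at hle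
  have hidx : K.relIndex H = 4 + 1 := by
    have : ¬ K.relIndex H ≤ 4 := fun h => absurd (hle.trans (factorial_le h)) (by decide)
    omega
  obtain ⟨e⟩ :=
    IsSimpleGroup.nonempty_mulEquiv_alternatingGroup_of_index hidx (by rw [hH60]; rfl)
  let e' : ↥(H ⊓ K) ≃* alternatingGroup (Fin 4) :=
    ((subgroupOfEquivOfLe inf_le_left).symm.trans
      (MulEquiv.subgroupCongr (inf_subgroupOf_left K H))).trans e
  exact ⟨⟨e'⟩, (Nat.card_congr e'.toEquiv).trans (nat_card_alternatingGroup_fin 2)⟩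
end

section
/- There is no injective group homomorphism from the symmetric group S₅ into PGL(2,ℂ); equivalently, S₅ admits no faithful action by projective transformations on the complex projective line ℂP¹. -/
/-!
Lift a 5-cycle `s` to `A ∈ GL₂(K)`. The quantity `κ = tr² / det` depends only on the class of `A`
in `PGL₂(K)` and is conjugation invariant; as `s` is conjugate to `s²` in `S₅`, this gives
`κ = κ(A²) = (κ - 2)²`. By Cayley–Hamilton, `A⁵ = c • A - e • 1` with `c = det² (κ² - 3κ + 1)`,
so if `A⁵` is scalar and `A` is not, then `κ² - 3κ + 1 = 0`. The two quadratics differ by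
`2κ - 3`, and `(2κ - 3)² = 4 (κ² - 3κ + 1) + 5`, so a common root forces `5 = 0` in `K`
(indeed `S₅ ≅ PGL₂(𝔽₅)`).
-/

open Matrix MatrixGroups

namespace Matrix

variable {R : Type*} [CommRing R]

theorem sq_eq_trace_smul_sub_det_smul (A : Matrix (Fin 2) (Fin 2) R) :
    A ^ 2 = A.trace • A - A.det • 1 := by
  ext i j
  fin_cases i <;> fin_cases j <;>
    simp [sq, mul_apply, trace_fin_two, det_fin_two] <;> ring

theorem pow_five_eq_smul_sub_smul_one (A : Matrix (Fin 2) (Fin 2) R) :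
    A ^ 5 = (A.trace ^ 4 - 3 * A.trace ^ 2 * A.det + A.det ^ 2) • A
      - (A.trace ^ 3 * A.det - 2 * A.trace * A.det ^ 2) • 1 := by
  ext i j
  fin_cases i <;> fin_cases j <;>
    simp [pow_succ, mul_apply, trace_fin_two, det_fin_two] <;> ring

theorem trace_sq_fin_two (A : Matrix (Fin 2) (Fin 2) R) :
    (A ^ 2).trace = A.trace ^ 2 - 2 * A.det := by
  simp only [sq_eq_trace_smul_sub_det_smul, trace_sub, trace_smul, trace_one, Fintype.card_fin,
    smul_eq_mul]
  push_cast; ring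

variable {K : Type*} [Field K]

def traceSqDivDet (A : Matrix (Fin 2) (Fin 2) K) : K := A.trace ^ 2 / A.det

theorem traceSqDivDet_smul (A : Matrix (Fin 2) (Fin 2) K) {c : K} (hc : c ≠ 0) :
    traceSqDivDet (c • A) = traceSqDivDet A := by
  simp only [traceSqDivDet, trace_smul, det_smul, Fintype.card_fin, smul_eq_mul, mul_pow]
  exact mul_div_mul_left _ _ (pow_ne_zero 2 hc)

theorem traceSqDivDet_units_conj (U : (Matrix (Fin 2) (Fin 2) K)ˣ)
    (A : Matrix (Fin 2) (Fin 2) K) :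
    traceSqDivDet (U.val * A * U⁻¹.val) = traceSqDivDet A := by
  simp only [traceSqDivDet, trace_units_conj, det_units_conj]

theorem traceSqDivDet_sq {A : Matrix (Fin 2) (Fin 2) K} (hA : A.det ≠ 0) :
    traceSqDivDet (A ^ 2) = (traceSqDivDet A - 2) ^ 2 := by
  rw [traceSqDivDet, traceSqDivDet, trace_sq_fin_two, det_pow]
  field_simp

theorem mem_range_scalar_or_of_pow_five_mem_range_scalar {A : Matrix (Fin 2) (Fin 2) K}
    (hA : A.det ≠ 0) (h5 : A ^ 5 ∈ Set.range (scalar (Fin 2))) :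
    A ∈ Set.range (scalar (Fin 2)) ∨ traceSqDivDet A ^ 2 - 3 * traceSqDivDet A + 1 = 0 := by
  obtain ⟨d, hd⟩ := h5
  have hpow := pow_five_eq_smul_sub_smul_one A
  rw [← hd, scalar_apply, ← smul_one_eq_diagonal] at hpow
  by_cases hc : A.trace ^ 4 - 3 * A.trace ^ 2 * A.det + A.det ^ 2 = 0
  · right
    rw [traceSqDivDet]
    field_simp
    linear_combination hc
  · left
    refine ⟨(A.trace ^ 4 - 3 * A.trace ^ 2 * A.det + A.det ^ 2)⁻¹ *
      (d + (A.trace ^ 3 * A.det - 2 * A.trace * A.det ^ 2)), ?_⟩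
    rw [scalar_apply, ← smul_one_eq_diagonal, mul_smul, inv_smul_eq_iff₀ hc]
    linear_combination (norm := module) hpow

namespace ProjGenLinGroup

theorem traceSqDivDet_eq_of_mk_eq {g h : GL (Fin 2) K} (hgh : mk g = mk h) :
    traceSqDivDet g.val = traceSqDivDet h.val := by
  obtain ⟨u, rfl⟩ := mk_eq_mk_iff.mp hgh
  rw [Units.val_mul, GeneralLinearGroup.coe_scalar, scalar_apply, ← smul_eq_mul_diagonal,
    traceSqDivDet_smul _ u.ne_zero]

theorem eq_one_of_pow_five_eq_one_of_conj_eq_sq (h5 : (5 : K) ≠ 0) {a b : PGL(2, K)}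
    (ha : a ^ 5 = 1) (hab : b * a * b⁻¹ = a ^ 2) : a = 1 := by
  induction a using induction_on with | mk g => ?_
  induction b using induction_on with | mk t => ?_
  have hdet : g.val.det ≠ 0 := g.det_ne_zero
  have hκ : traceSqDivDet g.val = (traceSqDivDet g.val - 2) ^ 2 := by
    calc traceSqDivDet g.val = traceSqDivDet (t * g * t⁻¹ : GL (Fin 2) K).val :=
          (traceSqDivDet_units_conj t g.val).symm
      _ = traceSqDivDet (g ^ 2 : GL (Fin 2) K).val :=
          traceSqDivDet_eq_of_mk_eq (by simpa using hab)
      _ = (traceSqDivDet g.val - 2) ^ 2 := by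
          rw [Units.val_pow_eq_pow_val, traceSqDivDet_sq hdet]
  have hg5 : g.val ^ 5 ∈ Set.range (scalar (Fin 2)) := by
    rw [← Units.val_pow_eq_pow_val, ← GeneralLinearGroup.mem_center_iff_val_mem_range_scalar,
      ← mk_eq_one, map_pow, ha]
  rcases mem_range_scalar_or_of_pow_five_mem_range_scalar hdet hg5 with hscalar | hquad
  · rwa [mk_eq_one, GeneralLinearGroup.mem_center_iff_val_mem_range_scalar]
  · have hlin : 2 * traceSqDivDet g.val - 3 = 0 := by linear_combination hκ + hquad
    exact absurd (by linear_combination (2 * traceSqDivDet g.val - 3) * hlin - 4 * hquad) h5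

end ProjGenLinGroup

end Matrix

/-- There is no injective group homomorphism from `S₅` into
`PGL(2,ℂ) = GL(2,ℂ)/center`; i.e. `S₅` has no faithful action by projective
transformations on `ℂP¹`. -/
theorem S5_does_not_embed_in_PGL2C :
    ¬ ∃ φ : Equiv.Perm (Fin 5) →*
        (Matrix.GeneralLinearGroup (Fin 2) ℂ ⧸
          Subgroup.center (Matrix.GeneralLinearGroup (Fin 2) ℂ)),
      Function.Injective φ := by
  rintro ⟨φ, hφ⟩
  set s : Equiv.Perm (Fin 5) := c[0, 1, 2, 3, 4]
  set t : Equiv.Perm (Fin 5) := c[1, 2, 4, 3]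
  have hs5 : s ^ 5 = 1 := by set_option maxRecDepth 2000 in decide
  have hts : t * s * t⁻¹ = s ^ 2 := by decide
  have hs : s ≠ 1 := by decide
  have ha : φ s ^ 5 = 1 := by rw [← map_pow, hs5, map_one]
  have hab : φ t * φ s * (φ t)⁻¹ = φ s ^ 2 := by
    rw [← map_inv, ← map_mul, ← map_mul, hts, map_pow]
  have hφs : φ s = 1 :=
    ProjGenLinGroup.eq_one_of_pow_five_eq_one_of_conj_eq_sq (by norm_num) ha hab
  exact hs (hφ (hφs.trans φ.map_one.symm))
end
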